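/- Under the hypotheses of the Riemannian-to-Lorentzian correspondence (T unit with geodesic flow and integrable normal bundle, g_L = g − 2T♭⊗T♭), the mixed curvature components agree: Rm_L(X,T,T,Y) = Rm(X,T,T,Y) for all X,Y orthogonal to T. In particular, Ric(T,T) = Ric_L(T,T). -/

import Mathlib

/-- An abstract calculus of smooth vector fields on a manifold `M`: a module of vector
fields over the smooth functions, together with a Lie bracket, a Riemannian metric `g`
and its Levi-Civita connection `nabla`. -/
structure SmoothVF (M : Type*) where
  VF : Type*
  [instAddCommGroup : AddCommGroup VF]
  [instModule : Module (M → ℝ) VF]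
  /-- the derivation action of a vector field on functions -/
  act : VF → (M → ℝ) → (M → ℝ)
  /-- the Lie bracket of vector fields -/
  bracket : VF → VF → VF
  /-- the Riemannian metric -/
  g : VF → VF → (M → ℝ)
  /-- the Levi-Civita connection of `g` -/
  nabla : VF → VF → VF
  g_symm : ∀ X Y, g X Y = g Y X
  g_add_left : ∀ X Y Z, g (X + Y) Z = g X Z + g Y Z
  g_smul_left : ∀ (f : M → ℝ) (X Y), g (f • X) Y = f * g X Y
  g_pos : ∀ X (p : M), 0 ≤ g X X p
  g_nondeg : ∀ X, (∀ Y, g X Y = 0) → X = 0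
  torsion_free : ∀ X Y, nabla X Y - nabla Y X = bracket X Y
  compat : ∀ X Y Z, act X (g Y Z) = g (nabla X Y) Z + g Y (nabla X Z)
  nabla_add_left : ∀ X Y Z, nabla (X + Y) Z = nabla X Z + nabla Y Z
  nabla_smul_left : ∀ (f : M → ℝ) (X Y), nabla (f • X) Y = f • nabla X Y
  nabla_add_right : ∀ X Y Z, nabla X (Y + Z) = nabla X Y + nabla X Z
  nabla_smul_right : ∀ (f : M → ℝ) (X Y), nabla X (f • Y) = act X f • Y + f • nabla X Y

attribute [instance] SmoothVF.instAddCommGroup SmoothVF.instModule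

namespace SmoothVF

variable {M : Type*} (D : SmoothVF M)

/-- The Riemann curvature 4-tensor of a connection `nab` with respect to a metric `gg`. -/
def riemOf (gg : D.VF → D.VF → (M → ℝ)) (nab : D.VF → D.VF → D.VF)
    (a b c d : D.VF) : M → ℝ :=
  gg (nab a (nab b c) - nab b (nab a c) - nab (D.bracket a b) c) d

/-- The Riemann curvature 4-tensor of `g`. -/
def Rm (a b c d : D.VF) : M → ℝ := D.riemOf D.g D.nabla a b c d

/-- The symmetric 2-tensor `∇T♭ : (X,Y) ↦ g(∇_X T, Y)`. -/
def nablaFlat (T : D.VF) (X Y : D.VF) : M → ℝ := D.g (D.nabla X T) Y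

/-- The Lorentzian sibling metric `g_L = g − 2T♭⊗T♭`. -/
def gLor (T : D.VF) (X Y : D.VF) : M → ℝ := D.g X Y - 2 * (D.g T X * D.g T Y)

/-- The Kulkarni–Nomizu product of two (symmetric) function-valued 2-tensors. -/
def kn (h k : D.VF → D.VF → (M → ℝ)) (a b c d : D.VF) : M → ℝ :=
  h a c * k b d + h b d * k a c - h a d * k b c - h b c * k a d

end SmoothVF

namespace SmoothVF

variable {M : Type*} (D : SmoothVF M)

/-- `nab` is the Levi-Civita connection of the metric `gg`: it is torsion-free,
compatible with `gg`, and tensorial/Leibniz in its arguments. -/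
def IsLeviCivitaOf (gg : D.VF → D.VF → (M → ℝ)) (nab : D.VF → D.VF → D.VF) : Prop :=
  (∀ X Y, nab X Y - nab Y X = D.bracket X Y) ∧
  (∀ X Y Z, D.act X (gg Y Z) = gg (nab X Y) Z + gg Y (nab X Z)) ∧
  (∀ X Y Z, nab (X + Y) Z = nab X Z + nab Y Z) ∧
  (∀ (f : M → ℝ) (X Y), nab (f • X) Y = f • nab X Y) ∧
  (∀ X Y Z, nab X (Y + Z) = nab X Y + nab X Z) ∧
  (∀ (f : M → ℝ) (X Y), nab X (f • Y) = D.act X f • Y + f • nab X Y)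

/-- Integrability of the orthogonal distribution `T^⊥`. -/
def PerpIntegrable (T : D.VF) : Prop :=
  ∀ X Y, D.g T X = 0 → D.g T Y = 0 → D.g T (D.bracket X Y) = 0

end SmoothVF

/-!
The Levi-Civita connection of `g_L` is `∇ᴸ_X Y = ∇_X Y + 2 g(∇_X T, Y) T`. Metric compatibility is
a direct computation; torsion-freeness is the symmetry of `∇T♭`, which holds because `T` is
geodesic and `T^⊥` is integrable; uniqueness is the Koszul formula together with the
nondegeneracy of `g_L`, whose musical map is the reflection in `T^⊥`. Since `T` is a unit field,
`∇_X T ⊥ T`, so `∇ᴸ_X T = ∇_X T`, and `∇_T T = 0` gives `∇ᴸ_T = ∇_T`. Hence `Rᴸ(Y,T)T = R(Y,T)T`,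
and pairing with `Z ⊥ T` the two metrics agree.
-/

namespace SmoothVF

variable {M : Type*} (D : SmoothVF M)

lemma g_add_right (X Y Z : D.VF) : D.g X (Y + Z) = D.g X Y + D.g X Z := by
  rw [D.g_symm X, D.g_add_left, D.g_symm Y, D.g_symm Z]

lemma g_smul_right (f : M → ℝ) (X Y : D.VF) : D.g X (f • Y) = f * D.g X Y := by
  rw [D.g_symm X, D.g_smul_left, D.g_symm Y]

lemma g_zero_left (Y : D.VF) : D.g 0 Y = 0 :=
  map_zero (AddMonoidHom.mk' (D.g · Y) fun X X' => D.g_add_left X X' Y)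

lemma g_zero_right (X : D.VF) : D.g X 0 = 0 := by
  rw [D.g_symm, g_zero_left]

lemma g_sub_left (X Y Z : D.VF) : D.g (X - Y) Z = D.g X Z - D.g Y Z :=
  map_sub (AddMonoidHom.mk' (D.g · Z) fun X X' => D.g_add_left X X' Z) X Y

lemma g_sub_right (X Y Z : D.VF) : D.g X (Y - Z) = D.g X Y - D.g X Z := by
  rw [D.g_symm X, g_sub_left, D.g_symm Y, D.g_symm Z]

lemma nabla_zero_right (X : D.VF) : D.nabla X 0 = 0 :=
  map_zero (AddMonoidHom.mk' (D.nabla X) (D.nabla_add_right X))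

lemma nabla_sub_right (X Y Z : D.VF) : D.nabla X (Y - Z) = D.nabla X Y - D.nabla X Z :=
  map_sub (AddMonoidHom.mk' (D.nabla X) (D.nabla_add_right X)) Y Z

lemma act_zero (X : D.VF) : D.act X 0 = 0 := by
  simpa only [g_zero_left, g_zero_right, add_zero] using D.compat X 0 0

lemma koszul (gg : D.VF → D.VF → (M → ℝ)) (nab : D.VF → D.VF → D.VF)
    (hsymm : ∀ X Y, gg X Y = gg Y X) (hsub : ∀ X Y Z, gg (X - Y) Z = gg X Z - gg Y Z)
    (htorsion : ∀ X Y, nab X Y - nab Y X = D.bracket X Y)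
    (hcompat : ∀ X Y Z, D.act X (gg Y Z) = gg (nab X Y) Z + gg Y (nab X Z))
    (X Y Z : D.VF) :
    2 * gg (nab X Y) Z =
      D.act X (gg Y Z) + D.act Y (gg X Z) - D.act Z (gg X Y)
        + gg (D.bracket X Y) Z - gg (D.bracket X Z) Y - gg (D.bracket Y Z) X := by
  rw [hcompat X Y Z, hcompat Y X Z, hcompat Z X Y, ← htorsion X Y, ← htorsion X Z,
    ← htorsion Y Z, hsub, hsub, hsub, hsymm Y (nab X Z), hsymm X (nab Y Z), hsymm X (nab Z Y)]
  ring

lemma connection_eq_of_torsion_of_compat (gg : D.VF → D.VF → (M → ℝ))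
    (hsymm : ∀ X Y, gg X Y = gg Y X) (hsub : ∀ X Y Z, gg (X - Y) Z = gg X Z - gg Y Z)
    (hnondeg : ∀ W, (∀ Z, gg W Z = 0) → W = 0) (nab nab' : D.VF → D.VF → D.VF)
    (htorsion : ∀ X Y, nab X Y - nab Y X = D.bracket X Y)
    (hcompat : ∀ X Y Z, D.act X (gg Y Z) = gg (nab X Y) Z + gg Y (nab X Z))
    (htorsion' : ∀ X Y, nab' X Y - nab' Y X = D.bracket X Y)
    (hcompat' : ∀ X Y Z, D.act X (gg Y Z) = gg (nab' X Y) Z + gg Y (nab' X Z)) :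
    nab = nab' := by
  funext X Y
  refine sub_eq_zero.mp (hnondeg _ fun Z => ?_)
  have h := (D.koszul gg nab hsymm hsub htorsion hcompat X Y Z).trans
    (D.koszul gg nab' hsymm hsub htorsion' hcompat' X Y Z).symm
  rw [hsub, sub_eq_zero]
  funext p
  simpa using congrFun h p

section UnitField

variable (T : D.VF)

def reflection (W : D.VF) : D.VF := W - (2 * D.g T W) • T

def projPerp (W : D.VF) : D.VF := W - D.g T W • T

def nablaLor (X Y : D.VF) : D.VF := D.nabla X Y + (2 * D.nablaFlat T X Y) • T

lemma gLor_eq_g_reflection (X Y : D.VF) : D.gLor T X Y = D.g (D.reflection T X) Y := by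
  simp only [gLor, reflection, g_sub_left, D.g_smul_left]
  ring

lemma gLor_symm (X Y : D.VF) : D.gLor T X Y = D.gLor T Y X := by
  simp only [gLor, D.g_symm X Y]
  ring

lemma gLor_sub_left (X Y Z : D.VF) : D.gLor T (X - Y) Z = D.gLor T X Z - D.gLor T Y Z := by
  simp only [gLor, g_sub_left, g_sub_right]
  ring

lemma gLor_eq_g_of_perp {Z : D.VF} (hZ : D.g T Z = 0) (Y : D.VF) :
    D.gLor T Y Z = D.g Y Z := by
  simp only [gLor, hZ, mul_zero, sub_zero]

lemma nablaFlat_symm_of_perp (hint : D.PerpIntegrable T) {Y Z : D.VF} (hY : D.g T Y = 0)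
    (hZ : D.g T Z = 0) : D.nablaFlat T Y Z = D.nablaFlat T Z Y := by
  have hYZ := D.compat Y T Z
  have hZY := D.compat Z T Y
  have hbr := hint Y Z hY hZ
  rw [hZ, act_zero] at hYZ
  rw [hY, act_zero] at hZY
  rw [← D.torsion_free, g_sub_right] at hbr
  unfold nablaFlat
  linear_combination -hYZ + hZY - hbr

lemma nablaLor_self_left (hgeo : D.nabla T T = 0) (Y : D.VF) :
    D.nablaLor T T Y = D.nabla T Y := by
  rw [nablaLor, nablaFlat, hgeo, g_zero_left, mul_zero, zero_smul, add_zero]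

variable {T} (hT : D.g T T = 1)
include hT

lemma act_one (X : D.VF) : D.act X 1 = 0 := by
  have h : D.act X 1 • T = 0 := by
    simpa only [one_smul, add_eq_right] using (D.nabla_smul_right 1 X T).symm
  simpa only [D.g_smul_left, hT, mul_one, g_zero_left] using congrArg (D.g · T) h

lemma nablaFlat_self (X : D.VF) : D.nablaFlat T X T = 0 := by
  have h := D.compat X T T
  rw [hT, D.act_one hT, D.g_symm T] at h
  funext p
  have hp := congrFun h p
  simp only [Pi.add_apply, Pi.zero_apply] at hp ⊢
  unfold nablaFlat
  linarith

lemma g_projPerp (W : D.VF) : D.g T (D.projPerp T W) = 0 := by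
  rw [projPerp, g_sub_right, g_smul_right, hT, mul_one, sub_self]

lemma reflection_reflection (W : D.VF) : D.reflection T (D.reflection T W) = W := by
  simp only [reflection, g_sub_right, g_smul_right, hT, sub_sub, ← add_smul]
  rw [show 2 * D.g T W + 2 * (D.g T W - 2 * D.g T W * 1) = 0 by ring, zero_smul, sub_zero]

lemma gLor_nondeg (W : D.VF) (h : ∀ Z, D.gLor T W Z = 0) : W = 0 := by
  have hW : D.reflection T W = 0 :=
    D.g_nondeg _ fun Z => by rw [← gLor_eq_g_reflection]; exact h Z
  rw [← D.reflection_reflection hT W, hW, reflection, g_zero_right, mul_zero, zero_smul,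
    sub_zero]

lemma nablaLor_compat (X Y Z : D.VF) :
    D.act X (D.gLor T Y Z) = D.gLor T (D.nablaLor T X Y) Z + D.gLor T Y (D.nablaLor T X Z) := by
  have hact : D.act X (2 * D.g T Y) = 2 * D.g (D.nabla X T) Y + 2 * D.g T (D.nabla X Y) := by
    rw [show 2 * D.g T Y = D.g T (Y + Y) by rw [g_add_right]; ring, D.compat,
      D.nabla_add_right, g_add_right, g_add_right]
    ring
  rw [gLor_eq_g_reflection, D.compat, reflection, nabla_sub_right, D.nabla_smul_right, hact]
  simp only [gLor, nablaLor, nablaFlat, g_sub_left, D.g_add_left, g_add_right,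
    D.g_smul_left, g_smul_right, hT, D.g_symm Y T]
  ring

lemma nablaLor_right_self (X : D.VF) : D.nablaLor T X T = D.nabla X T := by
  rw [nablaLor, D.nablaFlat_self hT, mul_zero, zero_smul, add_zero]

variable (hgeo : D.nabla T T = 0)
include hgeo

/-- `T` drops out of both slots: `∇_T T = 0` on the left and `∇_X T ⊥ T` on the right. -/
lemma nablaFlat_eq_projPerp (X Y : D.VF) :
    D.nablaFlat T X Y = D.nablaFlat T (D.projPerp T X) (D.projPerp T Y) := by
  have hX : D.nabla X T = D.nabla (D.projPerp T X) T + D.g T X • D.nabla T T := by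
    rw [projPerp, ← D.nabla_smul_left, ← D.nabla_add_left, sub_add_cancel]
  have hT_perp : ∀ W, D.g (D.nabla W T) T = 0 := D.nablaFlat_self hT
  simp only [nablaFlat]
  rw [hX, hgeo, smul_zero, add_zero, show D.projPerp T Y = Y - D.g T Y • T from rfl,
    g_sub_right, g_smul_right, hT_perp, mul_zero, sub_zero]

lemma riemOf_nablaLor_mixed (Y Z : D.VF) :
    D.riemOf D.g (D.nablaLor T) Y T T Z = D.Rm Y T T Z := by
  simp only [Rm, riemOf, D.nablaLor_right_self hT, D.nablaLor_self_left T hgeo, hgeo,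
    nabla_zero_right]
  rw [nablaLor, nablaFlat, nabla_zero_right, g_zero_right, mul_zero, zero_smul, add_zero]

variable (hint : D.PerpIntegrable T)
include hint

lemma nablaFlat_symm (X Y : D.VF) : D.nablaFlat T X Y = D.nablaFlat T Y X := by
  rw [D.nablaFlat_eq_projPerp hT hgeo X Y, D.nablaFlat_eq_projPerp hT hgeo Y X,
    D.nablaFlat_symm_of_perp T hint (D.g_projPerp hT X) (D.g_projPerp hT Y)]

lemma nablaLor_torsion (X Y : D.VF) :
    D.nablaLor T X Y - D.nablaLor T Y X = D.bracket X Y := by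
  rw [nablaLor, nablaLor, D.nablaFlat_symm hT hgeo hint X Y, ← D.torsion_free]
  abel

lemma eq_nablaLor {nablaL : D.VF → D.VF → D.VF} (hLC : D.IsLeviCivitaOf (D.gLor T) nablaL) :
    nablaL = D.nablaLor T :=
  D.connection_eq_of_torsion_of_compat (D.gLor T) (D.gLor_symm T) (D.gLor_sub_left T)
    (D.gLor_nondeg hT) nablaL (D.nablaLor T) hLC.1 hLC.2.1
    (D.nablaLor_torsion hT hgeo hint) (D.nablaLor_compat hT)

end UnitField

end SmoothVF

open SmoothVF

theorem stmt13_general {M : Type*} (D : SmoothVF M) (n : ℕ)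
    (T : D.VF) (hT : D.g T T = 1)
    (hgeo : D.nabla T T = 0) (hint : D.PerpIntegrable T)
    (nablaL : D.VF → D.VF → D.VF) (hLC : D.IsLeviCivitaOf (D.gLor T) nablaL)
    (X : Fin (n - 1) → D.VF) (hTX : ∀ i, D.g T (X i) = 0) :
    (∀ Y Z : D.VF, D.g T Y = 0 → D.g T Z = 0 →
      D.riemOf (D.gLor T) nablaL Y T T Z = D.Rm Y T T Z) ∧
    (∑ i, D.riemOf (D.gLor T) nablaL (X i) T T (X i)) =
      (∑ i, D.Rm (X i) T T (X i)) := by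
  have mixed : ∀ Y Z : D.VF, D.g T Y = 0 → D.g T Z = 0 →
      D.riemOf (D.gLor T) nablaL Y T T Z = D.Rm Y T T Z := by
    intro Y Z _ hZ
    rw [D.eq_nablaLor hT hgeo hint hLC, ← D.riemOf_nablaLor_mixed hT hgeo]
    exact D.gLor_eq_g_of_perp T hZ _
  exact ⟨mixed, Finset.sum_congr rfl fun i _ => mixed (X i) (X i) (hTX i) (hTX i)⟩

/-- Under the Riemannian-to-Lorentzian correspondence, the mixed curvature components
agree: `Rm_L(X,T,T,Y) = Rm(X,T,T,Y)` for `X, Y ⊥ T`; in particular, computing the Ricci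
curvatures in an orthonormal frame `{T, X₁, …, X_{n−1}}`, `Ric(T,T) = Ric_L(T,T)`. -/
theorem stmt13 {M : Type*} (D : SmoothVF M) (n : ℕ) (hn : 2 ≤ n)
    (T : D.VF) (hT : D.g T T = 1)
    (hgeo : D.nabla T T = 0) (hint : D.PerpIntegrable T)
    (nablaL : D.VF → D.VF → D.VF) (hLC : D.IsLeviCivitaOf (D.gLor T) nablaL)
    (X : Fin (n - 1) → D.VF) (hTX : ∀ i, D.g T (X i) = 0)
    (hXX : ∀ i j, D.g (X i) (X j) = if i = j then 1 else 0)
    (hframe : ∀ Z : D.VF, Z = D.g T Z • T + ∑ i, D.g (X i) Z • X i) :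
    (∀ Y Z : D.VF, D.g T Y = 0 → D.g T Z = 0 →
      D.riemOf (D.gLor T) nablaL Y T T Z = D.Rm Y T T Z) ∧
    (∑ i, D.riemOf (D.gLor T) nablaL (X i) T T (X i)) =
      (∑ i, D.Rm (X i) T T (X i)) :=
  stmt13_general D n T hT hgeo hint nablaL hLC X hTX
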